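/- arXiv:2405.18163 — 2 statements merged into one kernel-verified Lean document; each statement's English description precedes it below -/
import Mathlib

section
/- Let m₀, m₁ ∈ ℝⁿ and let Σ₀, Σ₁ be symmetric positive definite n×n real matrices such that Σ₀ - Σ₁ is positive definite. Then the ratio x ↦ f_{m₀,Σ₀}(x)/f_{m₁,Σ₁}(x) attains its global minimum at a unique point w ∈ ℝⁿ, namely w = (Σ₁⁻¹ - Σ₀⁻¹)⁻¹ (Σ₁⁻¹ m₁ - Σ₀⁻¹ m₀). -/
open Matrix MeasureTheory

/-- The multivariate Gaussian probability density function with mean `m` and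
covariance matrix `S` on `ℝⁿ`. -/
noncomputable def gaussianPDF {n : ℕ} (m : Fin n → ℝ) (S : Matrix (Fin n) (Fin n) ℝ)
    (x : Fin n → ℝ) : ℝ :=
  (2 * Real.pi) ^ (-(n : ℝ) / 2) * S.det ^ (-(1 : ℝ) / 2) *
    Real.exp (-(1 / 2) * ((x - m) ⬝ᵥ (S⁻¹ *ᵥ (x - m))))

/-!
The ratio of the two densities is a positive constant times `exp (-q x / 2)`, where
`q x = (x - m₀)ᵀ Σ₀⁻¹ (x - m₀) - (x - m₁)ᵀ Σ₁⁻¹ (x - m₁)`. Inversion is strictly antitone in the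
Loewner order, so `B = Σ₁⁻¹ - Σ₀⁻¹` is positive definite, and completing the square gives
`q x = q w - (x - w)ᵀ B (x - w)`. Hence the ratio is `C · exp ((x - w)ᵀ B (x - w) / 2)` with
`C > 0`, which is minimal exactly at `x = w`.
-/

namespace Matrix

variable {ι R : Type*} [Fintype ι]

theorem IsSymm.dotProduct_mulVec_comm [CommSemiring R] {A : Matrix ι ι R} (hA : A.IsSymm)
    (u v : ι → R) : u ⬝ᵥ A *ᵥ v = v ⬝ᵥ A *ᵥ u := by
  rw [dotProduct_mulVec, dotProduct_comm, ← mulVec_transpose, hA.eq]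

theorem IsSymm.add_dotProduct_mulVec_add [CommSemiring R] {A : Matrix ι ι R} (hA : A.IsSymm)
    (u v : ι → R) :
    (u + v) ⬝ᵥ A *ᵥ (u + v) = u ⬝ᵥ A *ᵥ u + 2 * (u ⬝ᵥ A *ᵥ v) + v ⬝ᵥ A *ᵥ v := by
  rw [mulVec_add, dotProduct_add, add_dotProduct, add_dotProduct,
    hA.dotProduct_mulVec_comm v u]
  ring

/-- Completing the square: `hw` is exactly the condition that the cross terms vanish at `w`. -/
theorem IsSymm.sub_dotProduct_mulVec_sub_sub_eq [CommRing R] {A₀ A₁ : Matrix ι ι R}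
    (h₀ : A₀.IsSymm) (h₁ : A₁.IsSymm) {m₀ m₁ w : ι → R}
    (hw : (A₁ - A₀) *ᵥ w = A₁ *ᵥ m₁ - A₀ *ᵥ m₀) (x : ι → R) :
    (x - m₀) ⬝ᵥ A₀ *ᵥ (x - m₀) - (x - m₁) ⬝ᵥ A₁ *ᵥ (x - m₁) =
      (w - m₀) ⬝ᵥ A₀ *ᵥ (w - m₀) - (w - m₁) ⬝ᵥ A₁ *ᵥ (w - m₁) -
        (x - w) ⬝ᵥ (A₁ - A₀) *ᵥ (x - w) := by
  have hcross : A₀ *ᵥ (w - m₀) = A₁ *ᵥ (w - m₁) := by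
    rw [sub_mulVec] at hw
    rw [mulVec_sub, mulVec_sub]
    linear_combination -hw
  rw [← sub_add_sub_cancel x w m₀, ← sub_add_sub_cancel x w m₁,
    h₀.add_dotProduct_mulVec_add, h₁.add_dotProduct_mulVec_add, hcross, sub_mulVec,
    dotProduct_sub]
  ring

namespace PosDef

variable {S S₀ S₁ B : Matrix ι ι ℝ}

theorem forall_sub_dotProduct_mulVec_sub_le_iff (hB : B.PosDef) (c w : ι → ℝ) :
    (∀ x, (w - c) ⬝ᵥ B *ᵥ (w - c) ≤ (x - c) ⬝ᵥ B *ᵥ (x - c)) ↔ w = c := by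
  refine ⟨fun h => ?_, fun h x => ?_⟩
  · by_contra hne
    have hpos := hB.dotProduct_mulVec_pos (sub_ne_zero.mpr hne)
    have hle := h c
    simp only [star_trivial, sub_self, mulVec_zero, dotProduct_zero] at hpos hle
    linarith
  · simpa [h] using hB.posSemidef.dotProduct_mulVec_nonneg (x - c)

variable [DecidableEq ι]

theorem mulVec_inv_mulVec (hS : S.PosDef) (x : ι → ℝ) : S *ᵥ (S⁻¹ *ᵥ x) = x := by
  rw [mulVec_mulVec, mul_nonsing_inv _ hS.det_pos.ne'.isUnit, one_mulVec]

/-- Fenchel–Young inequality for the quadratic form of `S`, with equality at `y = S⁻¹ x`. -/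
theorem two_mul_dotProduct_sub_le (hS : S.PosDef) (x y : ι → ℝ) :
    2 * (y ⬝ᵥ x) - y ⬝ᵥ S *ᵥ y ≤ x ⬝ᵥ S⁻¹ *ᵥ x := by
  set u := S⁻¹ *ᵥ x
  have hu : S *ᵥ u = x := hS.mulVec_inv_mulVec x
  have hsymm : S.IsSymm := isHermitian_iff_isSymm.mp hS.isHermitian
  have hnonneg : 0 ≤ (y - u) ⬝ᵥ S *ᵥ (y - u) := by
    simpa using hS.posSemidef.dotProduct_mulVec_nonneg (y - u)
  have hswap : u ⬝ᵥ S *ᵥ y = y ⬝ᵥ x := by rw [hsymm.dotProduct_mulVec_comm, hu]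
  rw [mulVec_sub, hu, dotProduct_sub, sub_dotProduct, sub_dotProduct, hswap] at hnonneg
  rw [dotProduct_comm x u]
  linarith

theorem inv_sub_inv_posDef (h₁ : S₁.PosDef) (h : (S₀ - S₁).PosDef) : (S₁⁻¹ - S₀⁻¹).PosDef := by
  have h₀ : S₀.PosDef := by simpa using h.add h₁
  refine of_dotProduct_mulVec_pos (h₁.inv.isHermitian.sub h₀.inv.isHermitian) fun x hx => ?_
  set u := S₀⁻¹ *ᵥ x
  have hu : S₀ *ᵥ u = x := h₀.mulVec_inv_mulVec x
  have hu₀ : u ≠ 0 := fun hu' => hx (by rw [← hu, hu', mulVec_zero])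
  have hgap : 0 < u ⬝ᵥ S₀ *ᵥ u - u ⬝ᵥ S₁ *ᵥ u := by
    simpa [sub_mulVec, dotProduct_sub] using h.dotProduct_mulVec_pos hu₀
  have hfy := h₁.two_mul_dotProduct_sub_le x u
  rw [hu] at hgap
  simp only [star_trivial, sub_mulVec, dotProduct_sub]
  rw [dotProduct_comm x u]
  linarith

end PosDef

end Matrix

theorem gaussianPDF_div_gaussianPDF {n : ℕ} (m₀ m₁ : Fin n → ℝ)
    (S₀ S₁ : Matrix (Fin n) (Fin n) ℝ) (x : Fin n → ℝ) :
    gaussianPDF m₀ S₀ x / gaussianPDF m₁ S₁ x =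
      S₀.det ^ (-(1 : ℝ) / 2) / S₁.det ^ (-(1 : ℝ) / 2) *
        Real.exp (-(1 / 2) *
          ((x - m₀) ⬝ᵥ S₀⁻¹ *ᵥ (x - m₀) - (x - m₁) ⬝ᵥ S₁⁻¹ *ᵥ (x - m₁))) := by
  have hπ : (0 : ℝ) < (2 * Real.pi) ^ (-(n : ℝ) / 2) := by positivity
  rw [gaussianPDF, gaussianPDF, mul_div_mul_comm, mul_div_mul_left _ _ hπ.ne', ← Real.exp_sub]
  ring_nf

theorem ratio_isGlobalMin_iff_eq_unique_point_general {n : ℕ} (m₀ m₁ : Fin n → ℝ)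
    (S₀ S₁ : Matrix (Fin n) (Fin n) ℝ) (hS₁ : S₁.PosDef)
    (hdiff : (S₀ - S₁).PosDef) :
    ∀ w : Fin n → ℝ,
      (∀ x : Fin n → ℝ,
          gaussianPDF m₀ S₀ w / gaussianPDF m₁ S₁ w ≤
            gaussianPDF m₀ S₀ x / gaussianPDF m₁ S₁ x) ↔
        w = (S₁⁻¹ - S₀⁻¹)⁻¹ *ᵥ (S₁⁻¹ *ᵥ m₁ - S₀⁻¹ *ᵥ m₀) := by
  intro w
  have hS₀ : S₀.PosDef := by simpa using hdiff.add hS₁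
  have hB := hS₁.inv_sub_inv_posDef hdiff
  set w₀ := (S₁⁻¹ - S₀⁻¹)⁻¹ *ᵥ (S₁⁻¹ *ᵥ m₁ - S₀⁻¹ *ᵥ m₀)
  have hw₀ : (S₁⁻¹ - S₀⁻¹) *ᵥ w₀ = S₁⁻¹ *ᵥ m₁ - S₀⁻¹ *ᵥ m₀ := hB.mulVec_inv_mulVec _
  have hsquare := IsSymm.sub_dotProduct_mulVec_sub_sub_eq
    (isHermitian_iff_isSymm.mp hS₀.inv.isHermitian) (isHermitian_iff_isSymm.mp hS₁.inv.isHermitian)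
    hw₀
  obtain ⟨C, hC, hratio⟩ : ∃ C > 0, ∀ x, gaussianPDF m₀ S₀ x / gaussianPDF m₁ S₁ x =
      C * Real.exp ((x - w₀) ⬝ᵥ (S₁⁻¹ - S₀⁻¹) *ᵥ (x - w₀) / 2) := by
    have hdet₀ := hS₀.det_pos
    have hdet₁ := hS₁.det_pos
    refine ⟨S₀.det ^ (-(1 : ℝ) / 2) / S₁.det ^ (-(1 : ℝ) / 2) * Real.exp (-(1 / 2) *
      ((w₀ - m₀) ⬝ᵥ S₀⁻¹ *ᵥ (w₀ - m₀) - (w₀ - m₁) ⬝ᵥ S₁⁻¹ *ᵥ (w₀ - m₁))), by positivity,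
      fun x => ?_⟩
    rw [gaussianPDF_div_gaussianPDF, hsquare, mul_assoc, ← Real.exp_add]
    ring_nf
  simp only [hratio, mul_le_mul_iff_right₀ hC, Real.exp_le_exp,
    div_le_div_iff_of_pos_right (two_pos : (0 : ℝ) < 2)]
  exact hB.forall_sub_dotProduct_mulVec_sub_le_iff w₀ w

/-- If `S₀ - S₁` is positive definite, then the ratio
`x ↦ f_{m₀,S₀}(x) / f_{m₁,S₁}(x)` attains its global minimum at the unique point
`w = (S₁⁻¹ - S₀⁻¹)⁻¹ (S₁⁻¹ m₁ - S₀⁻¹ m₀)`. -/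
theorem ratio_isGlobalMin_iff_eq_unique_point {n : ℕ} (m₀ m₁ : Fin n → ℝ)
    (S₀ S₁ : Matrix (Fin n) (Fin n) ℝ) (hS₀ : S₀.PosDef) (hS₁ : S₁.PosDef)
    (hdiff : (S₀ - S₁).PosDef) :
    ∀ w : Fin n → ℝ,
      (∀ x : Fin n → ℝ,
          gaussianPDF m₀ S₀ w / gaussianPDF m₁ S₁ w ≤
            gaussianPDF m₀ S₀ x / gaussianPDF m₁ S₁ x) ↔
        w = (S₁⁻¹ - S₀⁻¹)⁻¹ *ᵥ (S₁⁻¹ *ᵥ m₁ - S₀⁻¹ *ᵥ m₀) :=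
  ratio_isGlobalMin_iff_eq_unique_point_general m₀ m₁ S₀ S₁ hS₁ hdiff
end

section
/- Let m₀, m₁ ∈ ℝⁿ, let σᵢ > 0 and 0 < hᵢ ≤ 1 for i = 1,…,n, and suppose that m₀ᵢ = m₁ᵢ whenever hᵢ = 1. Set Σ₀ = diag(σ₁²,…,σₙ²) and Σ₁ = diag(h₁σ₁²,…,hₙσₙ²). Then the global minimum of x ↦ f_{m₀,Σ₀}(x)/f_{m₁,Σ₁}(x) over ℝⁿ is attained and equals (∏_{i=1}^{n} hᵢ)^{1/2} · exp(-(1/2) Σ_{i : hᵢ<1} (m₁ᵢ - m₀ᵢ)² / ((1-hᵢ) σᵢ²)). -/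
/-!
Both covariances are diagonal, so the ratio of the densities is `(∏ hᵢ)^{1/2}` times
`exp(-(1/2) ∑ qᵢ(xᵢ))` with `qᵢ(t) = (t - m₀ᵢ)²/σᵢ² - (t - m₁ᵢ)²/(hᵢσᵢ²)`. Minimising the ratio
means maximising each `qᵢ` separately. For `hᵢ < 1`, completing the square exhibits `qᵢ` as a
concave parabola with maximum `(m₁ᵢ - m₀ᵢ)²/((1 - hᵢ)σᵢ²)`; for `hᵢ = 1` the means agree and
`qᵢ ≡ 0`.
-/

open Matrix MeasureTheory

lemma Matrix.inv_diagonal_of_ne_zero {ι : Type*} [Fintype ι] [DecidableEq ι] {K : Type*}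
    [Field K] {d : ι → K} (hd : ∀ i, d i ≠ 0) : (diagonal d)⁻¹ = diagonal d⁻¹ :=
  inv_eq_right_inv <| by
    rw [diagonal_mul_diagonal, ← diagonal_one]
    exact congrArg diagonal (funext fun i => mul_inv_cancel₀ (hd i))

lemma gaussianPDF_diagonal {n : ℕ} (m d x : Fin n → ℝ) (hd : ∀ i, d i ≠ 0) :
    gaussianPDF m (diagonal d) x =
      (2 * Real.pi) ^ (-(n : ℝ) / 2) * (∏ i, d i) ^ (-(1 : ℝ) / 2) *
        Real.exp (-(1 / 2) * ∑ i, (x i - m i) ^ 2 / d i) := by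
  simp only [gaussianPDF, det_diagonal, inv_diagonal_of_ne_zero hd, mulVec_diagonal,
    dotProduct, Pi.sub_apply, Pi.inv_apply]
  congr 4 with i
  ring

lemma gaussianPDF_diagonal_div {n : ℕ} (m₀ m₁ d k : Fin n → ℝ) (hd : ∀ i, 0 < d i)
    (hk : ∀ i, 0 < k i) (x : Fin n → ℝ) :
    gaussianPDF m₀ (diagonal d) x / gaussianPDF m₁ (diagonal fun i => k i * d i) x =
      (∏ i, k i) ^ ((1 : ℝ) / 2) *
        Real.exp (-(1 / 2) * ∑ i, ((x i - m₀ i) ^ 2 / d i - (x i - m₁ i) ^ 2 / (k i * d i))) := by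
  have hK : 0 < ∏ i, k i := Finset.prod_pos fun i _ => hk i
  have hD : 0 < ∏ i, d i := Finset.prod_pos fun i _ => hd i
  rw [gaussianPDF_diagonal _ _ _ fun i => (hd i).ne',
    gaussianPDF_diagonal _ _ _ fun i => (mul_pos (hk i) (hd i)).ne',
    Finset.prod_mul_distrib, Real.mul_rpow hK.le hD.le, Finset.sum_sub_distrib, mul_sub,
    Real.exp_sub, div_eq_iff (by positivity)]
  field_simp
  rw [← Real.rpow_add hK]
  norm_num

/-- For `k < 1` the vertex of the concave parabola `t ↦ (t - a)² / s - (t - b)² / (k s)`;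
for `k = 1` and `a = b` that function vanishes and any point will do. -/
noncomputable def densityRatioArgmin (a b k : ℝ) : ℝ :=
  if k < 1 then (b - k * a) / (1 - k) else a

section CompleteSquare

variable {a b s k : ℝ}

lemma sq_div_sub_sq_div_eq (hs : s ≠ 0) (hk : k ≠ 0) (hk1 : 1 - k ≠ 0) (t : ℝ) :
    (t - a) ^ 2 / s - (t - b) ^ 2 / (k * s) =
      (b - a) ^ 2 / ((1 - k) * s) - ((1 - k) * t - (b - k * a)) ^ 2 / (k * (1 - k) * s) := by
  field_simp
  ring

lemma sq_div_sub_sq_div_le (hs : 0 < s) (hk : 0 < k) (hk1 : k < 1) (t : ℝ) :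
    (t - a) ^ 2 / s - (t - b) ^ 2 / (k * s) ≤ (b - a) ^ 2 / ((1 - k) * s) := by
  rw [sq_div_sub_sq_div_eq hs.ne' hk.ne' (sub_ne_zero.2 hk1.ne')]
  have : 0 < k * (1 - k) * s := by have := sub_pos.2 hk1; positivity
  linarith [div_nonneg (sq_nonneg ((1 - k) * t - (b - k * a))) this.le]

lemma sq_div_sub_sq_div_vertex (hs : s ≠ 0) (hk : k ≠ 0) (hk1 : 1 - k ≠ 0) :
    ((b - k * a) / (1 - k) - a) ^ 2 / s - ((b - k * a) / (1 - k) - b) ^ 2 / (k * s) =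
      (b - a) ^ 2 / ((1 - k) * s) := by
  rw [sq_div_sub_sq_div_eq hs hk hk1, mul_div_cancel₀ _ hk1]
  simp

lemma sq_div_sub_sq_div_le_ite (hs : 0 < s) (hk : 0 < k) (hk1 : k ≤ 1) (hab : k = 1 → a = b)
    (t : ℝ) :
    (t - a) ^ 2 / s - (t - b) ^ 2 / (k * s) ≤
      if k < 1 then (b - a) ^ 2 / ((1 - k) * s) else 0 := by
  split_ifs with hlt
  · exact sq_div_sub_sq_div_le hs hk hlt t
  · obtain rfl : k = 1 := le_antisymm hk1 (not_lt.1 hlt)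
    simp [hab rfl]

lemma sq_div_sub_sq_div_densityRatioArgmin (hs : 0 < s) (hk : 0 < k) (hk1 : k ≤ 1)
    (hab : k = 1 → a = b) :
    (densityRatioArgmin a b k - a) ^ 2 / s - (densityRatioArgmin a b k - b) ^ 2 / (k * s) =
      if k < 1 then (b - a) ^ 2 / ((1 - k) * s) else 0 := by
  unfold densityRatioArgmin
  split_ifs with hlt
  · exact sq_div_sub_sq_div_vertex hs.ne' hk.ne' (sub_ne_zero.2 hlt.ne')
  · obtain rfl : k = 1 := le_antisymm hk1 (not_lt.1 hlt)
    simp [hab rfl]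

end CompleteSquare

/-- For diagonal covariances `Σ₀ = diag(σᵢ²)`, `Σ₁ = diag(hᵢσᵢ²)` with
`0 < hᵢ ≤ 1` and `m₀ᵢ = m₁ᵢ` whenever `hᵢ = 1`, the global minimum of the ratio
`f_{m₀,Σ₀}/f_{m₁,Σ₁}` is attained and equals
`(∏ hᵢ)^{1/2} · exp(-(1/2) ∑_{i : hᵢ<1} (m₁ᵢ - m₀ᵢ)²/((1-hᵢ)σᵢ²))`. -/
theorem ratio_min_value_diagonal {n : ℕ} (m₀ m₁ : Fin n → ℝ)
    (σ h : Fin n → ℝ) (hσ : ∀ i, 0 < σ i) (hh0 : ∀ i, 0 < h i) (hh1 : ∀ i, h i ≤ 1)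
    (hmean : ∀ i, h i = 1 → m₀ i = m₁ i) :
    ∃ x₀ : Fin n → ℝ,
      (∀ x : Fin n → ℝ,
        gaussianPDF m₀ (Matrix.diagonal (fun i => σ i ^ 2)) x₀ /
            gaussianPDF m₁ (Matrix.diagonal (fun i => h i * σ i ^ 2)) x₀ ≤
          gaussianPDF m₀ (Matrix.diagonal (fun i => σ i ^ 2)) x /
            gaussianPDF m₁ (Matrix.diagonal (fun i => h i * σ i ^ 2)) x) ∧
      gaussianPDF m₀ (Matrix.diagonal (fun i => σ i ^ 2)) x₀ /
          gaussianPDF m₁ (Matrix.diagonal (fun i => h i * σ i ^ 2)) x₀ =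
        (∏ i : Fin n, h i) ^ ((1 : ℝ) / 2) *
          Real.exp (-(1 / 2) *
            ∑ i : Fin n,
              if h i < 1 then (m₁ i - m₀ i) ^ 2 / ((1 - h i) * σ i ^ 2) else 0) := by
  have hσ2 : ∀ i, 0 < σ i ^ 2 := fun i => pow_pos (hσ i) 2
  have hratio := gaussianPDF_diagonal_div m₀ m₁ (fun i => σ i ^ 2) h hσ2 hh0
  set x₀ : Fin n → ℝ := fun i => densityRatioArgmin (m₀ i) (m₁ i) (h i)
  have hmax : ∑ i, ((x₀ i - m₀ i) ^ 2 / σ i ^ 2 - (x₀ i - m₁ i) ^ 2 / (h i * σ i ^ 2)) =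
      ∑ i, if h i < 1 then (m₁ i - m₀ i) ^ 2 / ((1 - h i) * σ i ^ 2) else 0 :=
    Finset.sum_congr rfl fun i _ =>
      sq_div_sub_sq_div_densityRatioArgmin (hσ2 i) (hh0 i) (hh1 i) (hmean i)
  refine ⟨x₀, fun x => ?_, by rw [hratio, hmax]⟩
  have hle : ∑ i, ((x i - m₀ i) ^ 2 / σ i ^ 2 - (x i - m₁ i) ^ 2 / (h i * σ i ^ 2)) ≤
      ∑ i, if h i < 1 then (m₁ i - m₀ i) ^ 2 / ((1 - h i) * σ i ^ 2) else 0 :=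
    Finset.sum_le_sum fun i _ =>
      sq_div_sub_sq_div_le_ite (hσ2 i) (hh0 i) (hh1 i) (hmean i) (x i)
  rw [hratio, hratio, hmax]
  refine mul_le_mul_of_nonneg_left (Real.exp_le_exp.2 (by linarith)) ?_
  exact Real.rpow_nonneg (Finset.prod_nonneg fun i _ => (hh0 i).le) _
end
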